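/- arXiv:1106.1626 — 5 statements merged into one kernel-verified Lean document; each statement's English description precedes it below -/
import Mathlib

section
/- Let f ∈ W^{1,2}(ℝ²). Then e^f − 1 ∈ L²(ℝ²). More precisely, using the expansion (e^f − 1)² = f² + Σ_{s≥3} ((2^s − 2)/s!) f^s and the embedding ‖f‖_{L^p(ℝ²)} ≤ (π(p/2 − 1))^{(p−2)/(2p)} ‖f‖_{W^{1,2}(ℝ²)} for p > 2, the L² norm of e^f − 1 is bounded by a quantity depending only on ‖f‖_{W^{1,2}(ℝ²)}. -/
open MeasureTheory Real

/-- The square of the `W^{1,2}(ℝ²)` norm of `f`. -/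
noncomputable def sobNormSq (f : EuclideanSpace ℝ (Fin 2) → ℝ) : ℝ :=
  (∫ x, (f x) ^ 2) + ∫ x, ‖fderiv ℝ f x‖ ^ 2

/-!
Pointwise, `(eᵗ - 1)² ≤ e^{2|t|} - 1 - 2|t| = ∑_{n ≥ 2} (2|t|)ⁿ / n!`, so integrating termwise gives
`‖e^f - 1‖₂² ≤ ∑_{n ≥ 2} 2ⁿ / n! · ‖f‖ₙⁿ`. The embedding bounds `‖f‖ₙ` by `Cₙ M` with
`M = ‖f‖_{W^{1,2}}` and `Cₙⁿ ≤ (πn)^{n/2} ≤ √((πe)ⁿ n!)`, so the `n`-th term is at most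
`√(xⁿ / n!)` with `x = 4πeM²`; by AM-GM against `2⁻ⁿ` these terms are summable.
-/

open Nat
open scoped ENNReal

lemma exp_sub_one_sub_eq_tsum (x : ℝ) :
    exp x - 1 - x = ∑' n : ℕ, x ^ (n + 2) / (n + 2)! := by
  simp only [Real.exp_eq_exp_ℝ, NormedSpace.exp_eq_tsum_div]
  rw [← (summable_pow_div_factorial x).sum_add_tsum_nat_add 2, Finset.sum_range_succ,
    Finset.sum_range_one]
  simp only [pow_zero, pow_one, factorial_zero, factorial_one, cast_one, div_one]
  ring

lemma sq_exp_sub_one_le_exp_two_mul_abs (t : ℝ) :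
    (exp t - 1) ^ 2 ≤ exp (2 * |t|) - 1 - 2 * |t| := by
  have h_abs : (exp t - 1) ^ 2 ≤ (exp |t| - 1) ^ 2 := by
    refine sq_le_sq' ?_ (by gcongr; exact le_abs_self t)
    have h_cosh : 2 ≤ exp t + exp (-t) := by
      have := one_le_cosh t
      rw [cosh_eq] at this
      linarith
    have := exp_le_exp.2 (neg_le_abs t)
    linarith
  have h_lin := add_one_le_exp |t|
  rw [show 2 * |t| = |t| + |t| by ring, exp_add]
  nlinarith

lemma enorm_exp_sub_one_sq_le_tsum (t : ℝ) :
    ‖exp t - 1‖ₑ ^ 2 ≤ ∑' n : ℕ, ENNReal.ofReal (2 ^ (n + 2) / (n + 2)!) * ‖t‖ₑ ^ (n + 2) := by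
  have h_summable : Summable fun n : ℕ => (2 * |t|) ^ (n + 2) / (n + 2)! :=
    (summable_nat_add_iff 2).mpr (summable_pow_div_factorial _)
  calc ‖exp t - 1‖ₑ ^ 2 = ENNReal.ofReal ((exp t - 1) ^ 2) := by
        rw [← ofReal_norm, ← ENNReal.ofReal_pow (norm_nonneg _), norm_eq_abs, sq_abs]
    _ ≤ ENNReal.ofReal (∑' n : ℕ, (2 * |t|) ^ (n + 2) / (n + 2)!) := by
        rw [← exp_sub_one_sub_eq_tsum]
        exact ENNReal.ofReal_le_ofReal (sq_exp_sub_one_le_exp_two_mul_abs t)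
    _ = ∑' n : ℕ, ENNReal.ofReal (2 ^ (n + 2) / (n + 2)!) * ‖t‖ₑ ^ (n + 2) := by
        rw [ENNReal.ofReal_tsum_of_nonneg (fun n => by positivity) h_summable]
        refine tsum_congr fun n => ?_
        rw [← ofReal_norm, norm_eq_abs, ← ENNReal.ofReal_pow (abs_nonneg t),
          ← ENNReal.ofReal_mul (by positivity), mul_pow]
        ring_nf

lemma eLpNorm_natCast_pow_eq_lintegral {α E : Type*} [MeasurableSpace α] {μ : Measure α}
    [NormedAddCommGroup E] {f : α → E} {n : ℕ} (hn : n ≠ 0) :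
    eLpNorm f n μ ^ n = ∫⁻ x, ‖f x‖ₑ ^ n ∂μ := by
  have := eLpNorm_nnreal_pow_eq_lintegral (f := f) (μ := μ) (p := (n : NNReal)) (by simpa using hn)
  simpa [ENNReal.rpow_natCast] using this

lemma summable_sqrt_pow_div_factorial {x : ℝ} (hx : 0 ≤ x) :
    Summable fun n : ℕ => √(x ^ n / n !) := by
  refine Summable.of_nonneg_of_le (fun n => sqrt_nonneg _) (fun n => ?_)
    (((summable_pow_div_factorial (2 * x)).add
      (summable_geometric_of_lt_one (by norm_num) (by norm_num : (1 / 2 : ℝ) < 1))).div_const 2)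
  have h_split : x ^ n / n ! = (2 * x) ^ n / n ! * (1 / 2) ^ n := by
    rw [div_mul_eq_mul_div, ← mul_pow]; ring
  rw [sqrt_le_left (by positivity), h_split]
  nlinarith [sq_nonneg ((2 * x) ^ n / (n ! : ℝ) - (1 / 2) ^ n)]

/-- At `p = 2` this is `0 ^ 0 = 1`, the constant of the trivial bound `‖f‖₂ ≤ ‖f‖_{W^{1,2}}`. -/
noncomputable def sobolevConst (p : ℝ) : ℝ := (π * (p / 2 - 1)) ^ ((p - 2) / (2 * p))

lemma sobolevConst_two : sobolevConst 2 = 1 := by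
  norm_num [sobolevConst]

lemma sobolevConst_nonneg {p : ℝ} (hp : 2 ≤ p) : 0 ≤ sobolevConst p :=
  rpow_nonneg (mul_nonneg pi_pos.le (by linarith)) _

lemma sq_sobolevConst_pow {n : ℕ} (hn : 2 ≤ n) :
    (sobolevConst n ^ n) ^ 2 = (π * (n / 2 - 1)) ^ (n - 2) := by
  have hn' : (2 : ℝ) ≤ n := by exact_mod_cast hn
  rw [← pow_mul, sobolevConst, ← rpow_mul_natCast (mul_nonneg pi_pos.le (by linarith)),
    ← rpow_natCast _ (n - 2), Nat.cast_sub hn]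
  congr 1
  push_cast
  field_simp

lemma sq_sobolevConst_pow_le {n : ℕ} (hn : 2 ≤ n) :
    (sobolevConst n ^ n) ^ 2 ≤ (π * exp 1) ^ n * n ! := by
  have hn' : (2 : ℝ) ≤ n := by exact_mod_cast hn
  have h_pi_n : 1 ≤ π * n := by nlinarith [pi_gt_three]
  have h_stirling : (n : ℝ) ^ n ≤ exp 1 ^ n * n ! := by
    rw [exp_one_pow, ← div_le_iff₀ (by positivity)]
    exact pow_div_factorial_le_exp (n : ℝ) (Nat.cast_nonneg n) n
  calc (sobolevConst n ^ n) ^ 2 = (π * (n / 2 - 1)) ^ (n - 2) := sq_sobolevConst_pow hn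
    _ ≤ (π * n) ^ (n - 2) := by gcongr <;> nlinarith [pi_pos]
    _ ≤ (π * n) ^ n := pow_le_pow_right₀ h_pi_n (Nat.sub_le n 2)
    _ = π ^ n * n ^ n := mul_pow _ _ _
    _ ≤ π ^ n * (exp 1 ^ n * n !) := by gcongr
    _ = (π * exp 1) ^ n * n ! := by ring

lemma summable_sobolevConst_series {M : ℝ} (hM : 0 ≤ M) :
    Summable fun n : ℕ => 2 ^ (n + 2) / (n + 2)! * (sobolevConst (n + 2 : ℕ) * M) ^ (n + 2) := by
  refine ((summable_nat_add_iff 2).mpr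
    (summable_sqrt_pow_div_factorial (x := 4 * π * exp 1 * M ^ 2) (by positivity))).of_nonneg_of_le
    (fun n => ?_) (fun n => le_sqrt_of_sq_le ?_)
  · have := sobolevConst_nonneg (p := (n + 2 : ℕ)) (by push_cast; linarith)
    positivity
  · set m := n + 2
    have hm : 2 ≤ m := by omega
    have h_four : ((2 : ℝ) ^ m) ^ 2 = 4 ^ m := by rw [← pow_mul, mul_comm, pow_mul]; norm_num
    calc (2 ^ m / m ! * (sobolevConst m * M) ^ m) ^ 2
        = 4 ^ m * (M ^ 2) ^ m * (sobolevConst m ^ m) ^ 2 / m ! ^ 2 := by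
          rw [← h_four]; ring
      _ ≤ 4 ^ m * (M ^ 2) ^ m * ((π * exp 1) ^ m * m !) / m ! ^ 2 := by
          gcongr; exact sq_sobolevConst_pow_le hm
      _ = (4 * π * exp 1 * M ^ 2) ^ m / m ! := by
          field_simp; ring

section ExpMoments

variable {α : Type*} [MeasurableSpace α] {μ : Measure α} {f : α → ℝ}

lemma eLpNorm_exp_sub_one_sq_le (hf : AEMeasurable f μ) :
    eLpNorm (fun x => exp (f x) - 1) 2 μ ^ 2 ≤
      ∑' n : ℕ, ENNReal.ofReal (2 ^ (n + 2) / (n + 2)!) * eLpNorm f (n + 2 : ℕ) μ ^ (n + 2) := by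
  have h_meas (n : ℕ) : AEMeasurable (fun x =>
      ENNReal.ofReal (2 ^ (n + 2) / (n + 2)!) * ‖f x‖ₑ ^ (n + 2)) μ :=
    (hf.enorm.pow_const _).const_mul _
  calc eLpNorm (fun x => exp (f x) - 1) 2 μ ^ 2 = ∫⁻ x, ‖exp (f x) - 1‖ₑ ^ 2 ∂μ := by
        exact_mod_cast eLpNorm_natCast_pow_eq_lintegral two_ne_zero
    _ ≤ ∫⁻ x, ∑' n : ℕ, ENNReal.ofReal (2 ^ (n + 2) / (n + 2)!) * ‖f x‖ₑ ^ (n + 2) ∂μ :=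
        lintegral_mono fun x => enorm_exp_sub_one_sq_le_tsum (f x)
    _ = ∑' n : ℕ, ENNReal.ofReal (2 ^ (n + 2) / (n + 2)!) * eLpNorm f (n + 2 : ℕ) μ ^ (n + 2) := by
        rw [lintegral_tsum h_meas]
        refine tsum_congr fun n => ?_
        rw [lintegral_const_mul' _ _ ENNReal.ofReal_ne_top,
          eLpNorm_natCast_pow_eq_lintegral (by omega)]

theorem memLp_exp_sub_one_of_eLpNorm_le (hf : AEStronglyMeasurable f μ) {C : ℕ → ℝ}
    (hC : ∀ n, eLpNorm f (n + 2 : ℕ) μ ≤ ENNReal.ofReal (C n)) (hC_nonneg : ∀ n, 0 ≤ C n)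
    (hC_summable : Summable fun n : ℕ => 2 ^ (n + 2) / (n + 2)! * C n ^ (n + 2)) :
    MemLp (fun x => exp (f x) - 1) 2 μ ∧
      eLpNorm (fun x => exp (f x) - 1) 2 μ ≤
        ENNReal.ofReal √(∑' n : ℕ, 2 ^ (n + 2) / (n + 2)! * C n ^ (n + 2)) := by
  have h_term_nonneg (n : ℕ) : 0 ≤ 2 ^ (n + 2) / (n + 2)! * C n ^ (n + 2) := by
    have := hC_nonneg n; positivity
  have h_sq : eLpNorm (fun x => exp (f x) - 1) 2 μ ^ 2 ≤
      ENNReal.ofReal √(∑' n : ℕ, 2 ^ (n + 2) / (n + 2)! * C n ^ (n + 2)) ^ 2 := by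
    rw [← ENNReal.ofReal_pow (sqrt_nonneg _), sq_sqrt (tsum_nonneg h_term_nonneg),
      ENNReal.ofReal_tsum_of_nonneg h_term_nonneg hC_summable]
    refine (eLpNorm_exp_sub_one_sq_le hf.aemeasurable).trans (ENNReal.tsum_le_tsum fun n => ?_)
    rw [ENNReal.ofReal_mul (by positivity), ENNReal.ofReal_pow (hC_nonneg n)]
    gcongr
    exact hC n
  have h_le := (ENNReal.pow_le_pow_left_iff two_ne_zero).mp h_sq
  exact ⟨⟨(continuous_exp.comp_aestronglyMeasurable hf).sub aestronglyMeasurable_const,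
    h_le.trans_lt ENNReal.ofReal_lt_top⟩, h_le⟩

end ExpMoments

lemma eLpNorm_two_le_sqrt_sobNormSq {f : EuclideanSpace ℝ (Fin 2) → ℝ} (hf : MemLp f 2 volume) :
    eLpNorm f 2 volume ≤ ENNReal.ofReal √(sobNormSq f) := by
  rw [hf.eLpNorm_eq_integral_rpow_norm two_ne_zero ENNReal.ofNat_ne_top]
  refine ENNReal.ofReal_le_ofReal ?_
  have h_grad : 0 ≤ ∫ x, ‖fderiv ℝ f x‖ ^ 2 := integral_nonneg fun _ => sq_nonneg _
  have h_L2 : (∫ x, ‖f x‖ ^ (2 : ℝ≥0∞).toReal) ^ (2 : ℝ≥0∞).toReal⁻¹ = √(∫ x, f x ^ 2) := by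
    simp [sqrt_eq_rpow]
  rw [h_L2]
  exact sqrt_le_sqrt (le_add_of_nonneg_right h_grad)

lemma eLpNorm_le_sobolevConst_mul {f : EuclideanSpace ℝ (Fin 2) → ℝ} (hf : MemLp f 2 volume)
    (h_emb : ∀ p : ℝ, 2 < p →
      eLpNorm f (ENNReal.ofReal p) volume ≤ ENNReal.ofReal (sobolevConst p * √(sobNormSq f)))
    {n : ℕ} (hn : 2 ≤ n) :
    eLpNorm f n volume ≤ ENNReal.ofReal (sobolevConst n * √(sobNormSq f)) := by
  rcases hn.eq_or_lt with rfl | hn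
  · simpa [sobolevConst_two] using eLpNorm_two_le_sqrt_sobNormSq hf
  · simpa using h_emb n (by exact_mod_cast hn)

theorem stmt6 :
    ∃ B : ℝ → ℝ, ∀ f : EuclideanSpace ℝ (Fin 2) → ℝ,
      MemLp f 2 volume → Differentiable ℝ f →
      MemLp (fun x => ‖fderiv ℝ f x‖) 2 volume →
      (∀ p : ℝ, 2 < p →
        eLpNorm f (ENNReal.ofReal p) volume ≤
          ENNReal.ofReal ((π * (p / 2 - 1)) ^ ((p - 2) / (2 * p)) *
            Real.sqrt (sobNormSq f))) →
      MemLp (fun x => Real.exp (f x) - 1) 2 volume ∧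
      eLpNorm (fun x => Real.exp (f x) - 1) 2 volume ≤
        ENNReal.ofReal (B (Real.sqrt (sobNormSq f))) := by
  refine ⟨fun M => √(∑' n : ℕ, 2 ^ (n + 2) / (n + 2)! * (sobolevConst (n + 2 : ℕ) * M) ^ (n + 2)),
    fun f hf _ _ h_emb => ?_⟩
  have hM : 0 ≤ √(sobNormSq f) := sqrt_nonneg _
  exact memLp_exp_sub_one_of_eLpNorm_le hf.1
    (fun n => eLpNorm_le_sobolevConst_mul hf h_emb (by omega))
    (fun n => mul_nonneg (sobolevConst_nonneg (by push_cast; linarith)) hM)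
    (summable_sobolevConst_series hM)
end

section
/- Let v ∈ W^{1,2}(ℝ²). Then (∫_{ℝ²} v² dx)^{1/2} ≤ C (1 + ∫_{ℝ²} |∇v|² dx + ∫_{ℝ²} v²/(1+|v|)² dx) for some absolute constant C > 0. -/
/-!
Write `A = ∫ |∇v|²`, `B = ∫ v² / (1 + |v|)²` and `w = √(1 + v²) - 1`. Then
`|∇w| = |v| / √(1 + v²) · |∇v| ≤ v² / (1 + |v|)² + |∇v|² / 2`, so `∫ |∇w| ≤ B + A / 2`.
Bounding `|w(x, y)|` by the `L¹` norm of `∂₁w` along the horizontal line and of `∂₂w` along the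
vertical line through `(x, y)` gives the planar `L¹` Sobolev inequality
`∫ w² ≤ ∫ |∂₁w| · ∫ |∂₂w| ≤ (∫ |∇w|)²`. Finally `v² ≤ 9 w²` where `|v| ≥ 1` and
`v² ≤ 4 v² / (1 + |v|)²` where `|v| ≤ 1`, so `∫ v² ≤ 9 (B + A / 2)² + 4 B ≤ 16 (1 + A + B)²`.
-/

open MeasureTheory Filter Set

lemma abs_le_integral_abs_of_hasDerivAt {f f' : ℝ → ℝ} (hf : ∀ x, HasDerivAt f (f' x) x)
    (hfi : Integrable f) (hf'i : Integrable f') (x : ℝ) :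
    |f x| ≤ ∫ t, |f' t| := by
  have hlim : Tendsto f atBot (nhds 0) :=
    tendsto_zero_of_hasDerivAt_of_integrableOn_Iic (a := x) (fun t _ => hf t)
      hf'i.integrableOn hfi.integrableOn
  have hFTC : ∫ t in Iic x, f' t = f x := by
    simpa using integral_Iic_of_hasDerivAt_of_tendsto' (fun t _ => hf t) hf'i.integrableOn hlim
  calc |f x| = |∫ t in Iic x, f' t| := by rw [hFTC]
    _ ≤ ∫ t in Iic x, |f' t| := abs_integral_le_integral_abs
    _ ≤ ∫ t, |f' t| := setIntegral_le_integral hf'i.abs (.of_forall fun t => abs_nonneg _)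

lemma integral_sq_le_mul_integral_abs_partialDeriv {W F₁ F₂ : ℝ × ℝ → ℝ}
    (hW : Integrable W) (hF₁ : Integrable F₁) (hF₂ : Integrable F₂)
    (h₁ : ∀ x y, HasDerivAt (fun t => W (t, y)) (F₁ (x, y)) x)
    (h₂ : ∀ x y, HasDerivAt (fun t => W (x, t)) (F₂ (x, y)) y) :
    ∫ p, W p ^ 2 ≤ (∫ p, |F₁ p|) * ∫ p, |F₂ p| := by
  rw [Measure.volume_eq_prod] at *
  set g : ℝ → ℝ := fun y => ∫ x, |F₁ (x, y)|
  set h : ℝ → ℝ := fun x => ∫ y, |F₂ (x, y)|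
  have hg : ∀ᵐ p ∂(volume.prod volume : Measure (ℝ × ℝ)), |W p| ≤ g p.2 := by
    have : ∀ᵐ y, ∀ x, |W (x, y)| ≤ g y := by
      filter_upwards [hW.prod_left_ae, hF₁.prod_left_ae] with y hWy hFy x
      exact abs_le_integral_abs_of_hasDerivAt (fun t => h₁ t y) hWy hFy x
    filter_upwards [Measure.quasiMeasurePreserving_snd.ae this] with p hp
    exact hp p.1
  have hh : ∀ᵐ p ∂(volume.prod volume : Measure (ℝ × ℝ)), |W p| ≤ h p.1 := by
    have : ∀ᵐ x, ∀ y, |W (x, y)| ≤ h x := by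
      filter_upwards [hW.prod_right_ae, hF₂.prod_right_ae] with x hWx hFx y
      exact abs_le_integral_abs_of_hasDerivAt (h₂ x) hWx hFx y
    filter_upwards [Measure.quasiMeasurePreserving_fst.ae this] with p hp
    exact hp p.2
  have hprod : ∀ᵐ p ∂(volume.prod volume : Measure (ℝ × ℝ)), W p ^ 2 ≤ h p.1 * g p.2 := by
    filter_upwards [hg, hh] with p hpg hph
    rw [← sq_abs, sq]
    exact mul_le_mul hph hpg (abs_nonneg _) (hph.trans' (abs_nonneg _))
  calc ∫ p, W p ^ 2 ∂(volume.prod volume) ≤ ∫ p, h p.1 * g p.2 ∂(volume.prod volume) :=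
        integral_mono_of_nonneg (.of_forall fun p => sq_nonneg _)
          (hF₂.abs.integral_prod_left.mul_prod hF₁.abs.integral_prod_right) hprod
    _ = (∫ x, h x) * ∫ y, g y := integral_prod_mul h g
    _ = (∫ p, |F₁ p| ∂(volume.prod volume)) * ∫ p, |F₂ p| ∂(volume.prod volume) := by
        rw [integral_prod _ hF₂.abs, integral_prod_symm _ hF₁.abs, mul_comm]

lemma integral_sq_le_sq_integral_norm_fderiv {u : EuclideanSpace ℝ (Fin 2) → ℝ}
    (hu : Differentiable ℝ u) (hui : Integrable u)
    (hDu : Integrable fun x => ‖fderiv ℝ u x‖) :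
    ∫ x, u x ^ 2 ≤ (∫ x, ‖fderiv ℝ u x‖) ^ 2 := by
  let L : (ℝ × ℝ) ≃L[ℝ] EuclideanSpace ℝ (Fin 2) :=
    (ContinuousLinearEquiv.finTwoArrow ℝ ℝ).symm.trans (EuclideanSpace.equiv (Fin 2) ℝ).symm
  have hL : MeasurePreserving L volume volume :=
    (PiLp.volume_preserving_toLp (Fin 2)).comp (volume_preserving_finTwoArrow ℝ).symm
  have hLe := L.toHomeomorph.measurableEmbedding
  have hDuL : Integrable fun p => ‖fderiv ℝ u (L p)‖ := (hL.integrable_comp_emb hLe).2 hDu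
  have partial_le (e : ℝ × ℝ) (he : ‖L e‖ = 1) :
      Integrable (fun p => fderiv ℝ u (L p) (L e)) ∧
        ∫ p, |fderiv ℝ u (L p) (L e)| ≤ ∫ x, ‖fderiv ℝ u x‖ := by
    have hbound (p : ℝ × ℝ) : |fderiv ℝ u (L p) (L e)| ≤ ‖fderiv ℝ u (L p)‖ := by
      simpa [he] using (fderiv ℝ u (L p)).le_opNorm (L e)
    have hint : Integrable fun p => fderiv ℝ u (L p) (L e) :=
      hDuL.mono'
        ((measurable_fderiv_apply_const ℝ u (L e)).comp hLe.measurable).aestronglyMeasurable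
        (.of_forall hbound)
    refine ⟨hint, ?_⟩
    calc ∫ p, |fderiv ℝ u (L p) (L e)| ≤ ∫ p, ‖fderiv ℝ u (L p)‖ :=
          integral_mono hint.abs hDuL hbound
      _ = ∫ x, ‖fderiv ℝ u x‖ := hL.integral_comp hLe fun x => ‖fderiv ℝ u x‖
  have hslice (e : ℝ × ℝ) (c : ℝ → ℝ × ℝ) (t : ℝ) (hc : HasDerivAt c e t) :
      HasDerivAt (fun s => u (L (c s))) (fderiv ℝ u (L (c t)) (L e)) t :=
    (hu _).hasFDerivAt.comp_hasDerivAt t (L.hasFDerivAt.comp_hasDerivAt t hc)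
  obtain ⟨hF₁, hI₁⟩ := partial_le (1, 0) (by simp [L, EuclideanSpace.norm_eq])
  obtain ⟨hF₂, hI₂⟩ := partial_le (0, 1) (by simp [L, EuclideanSpace.norm_eq])
  have hGN := integral_sq_le_mul_integral_abs_partialDeriv ((hL.integrable_comp_emb hLe).2 hui)
    hF₁ hF₂ (fun x y => hslice _ (·, y) x ((hasDerivAt_id x).prodMk (hasDerivAt_const x y)))
    (fun x y => hslice _ (x, ·) y ((hasDerivAt_const y x).prodMk (hasDerivAt_id y)))
  calc ∫ x, u x ^ 2 = ∫ p, u (L p) ^ 2 := (hL.integral_comp hLe fun x => u x ^ 2).symm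
    _ ≤ _ := hGN
    _ ≤ (∫ x, ‖fderiv ℝ u x‖) * ∫ x, ‖fderiv ℝ u x‖ :=
        mul_le_mul hI₁ hI₂ (integral_nonneg fun _ => abs_nonneg _)
          (integral_nonneg fun _ => norm_nonneg _)
    _ = _ := (sq _).symm

lemma hasDerivAt_sqrt_one_add_sq (t : ℝ) :
    HasDerivAt (fun s => √(1 + s ^ 2)) (t / √(1 + t ^ 2)) t := by
  have h := ((hasDerivAt_pow 2 t).const_add 1).sqrt (by positivity)
  convert h using 1
  ring

lemma abs_sqrt_one_add_sq_sub_one_le_abs (t : ℝ) : |√(1 + t ^ 2) - 1| ≤ |t| := by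
  have h1 : 1 ≤ √(1 + t ^ 2) := Real.one_le_sqrt.2 (by nlinarith)
  rw [abs_of_nonneg (by linarith), sub_le_iff_le_add, Real.sqrt_le_iff]
  constructor <;> nlinarith [sq_abs t, abs_nonneg t]

lemma abs_sqrt_one_add_sq_sub_one_le_sq (t : ℝ) : |√(1 + t ^ 2) - 1| ≤ t ^ 2 := by
  have h1 : 1 ≤ √(1 + t ^ 2) := Real.one_le_sqrt.2 (by nlinarith)
  rw [abs_of_nonneg (by linarith), sub_le_iff_le_add, Real.sqrt_le_iff]
  constructor <;> nlinarith [sq_nonneg t]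

lemma sq_div_one_add_sq_le (t : ℝ) : t ^ 2 / (1 + t ^ 2) ≤ 2 * (t ^ 2 / (1 + |t|) ^ 2) := by
  rw [mul_div_assoc', div_le_div_iff₀ (by positivity) (by positivity)]
  nlinarith [sq_abs t, abs_nonneg t, sq_nonneg (1 - |t|), sq_nonneg t,
    mul_nonneg (sq_nonneg t) (sq_nonneg (1 - |t|))]

lemma sq_le_sqrt_one_add_sq_sub_one (t : ℝ) :
    t ^ 2 ≤ 9 * (√(1 + t ^ 2) - 1) ^ 2 + 4 * (t ^ 2 / (1 + |t|) ^ 2) := by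
  set s := √(1 + t ^ 2)
  have hs : s ^ 2 = 1 + t ^ 2 := Real.sq_sqrt (by positivity)
  have hs1 : 1 ≤ s := Real.one_le_sqrt.2 (by nlinarith)
  rcases le_total |t| 1 with ht | ht
  · have : t ^ 2 ≤ 4 * (t ^ 2 / (1 + |t|) ^ 2) := by
      rw [mul_div_assoc', le_div_iff₀ (by positivity)]
      have : (1 + |t|) ^ 2 ≤ 4 := by nlinarith [abs_nonneg t]
      nlinarith [mul_le_mul_of_nonneg_left this (sq_nonneg t)]
    nlinarith [sq_nonneg (s - 1)]
  · have hfac : |t| * |t| ≤ (s - 1) * (3 * |t|) := by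
      nlinarith [sq_abs t]
    have : |t| ≤ 3 * (s - 1) := by nlinarith
    have : t ^ 2 ≤ 9 * (s - 1) ^ 2 := by nlinarith [sq_abs t, abs_nonneg t]
    nlinarith [div_nonneg (sq_nonneg t) (sq_nonneg (1 + |t|))]

lemma norm_fderiv_sqrt_one_add_sq_sub_one_le {E : Type*} [NormedAddCommGroup E]
    [NormedSpace ℝ E] {v : E → ℝ} {x : E} (hv : DifferentiableAt ℝ v x) :
    ‖fderiv ℝ (fun y => √(1 + v y ^ 2) - 1) x‖ ≤
      v x ^ 2 / (1 + |v x|) ^ 2 + ‖fderiv ℝ v x‖ ^ 2 / 2 := by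
  set a := v x / √(1 + v x ^ 2)
  have ha : a ^ 2 = v x ^ 2 / (1 + v x ^ 2) := by
    rw [div_pow, Real.sq_sqrt (by positivity)]
  have hw : HasFDerivAt (fun y => √(1 + v y ^ 2) - 1) (a • fderiv ℝ v x) x :=
    ((hasDerivAt_sqrt_one_add_sq (v x)).comp_hasFDerivAt x hv.hasFDerivAt).sub_const 1
  rw [hw.fderiv, norm_smul, Real.norm_eq_abs]
  nlinarith [sq_div_one_add_sq_le (v x), sq_nonneg (|a| - ‖fderiv ℝ v x‖), sq_abs a]

section

variable {α : Type*} [MeasurableSpace α] {μ : Measure α} {v : α → ℝ}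

lemma MeasureTheory.MemLp.integrable_sq_div_one_add_abs_sq (hv : MemLp v 2 μ) :
    Integrable (fun x => v x ^ 2 / (1 + |v x|) ^ 2) μ := by
  refine hv.integrable_sq.mono' ?_ (.of_forall fun x => ?_)
  · have : Continuous fun t : ℝ => t ^ 2 / (1 + |t|) ^ 2 :=
      (continuous_pow 2).div (by fun_prop) fun t => by positivity
    exact this.comp_aestronglyMeasurable hv.1
  · rw [Real.norm_of_nonneg (by positivity)]
    exact div_le_self (sq_nonneg _) (one_le_pow₀ (by simp))

lemma MeasureTheory.MemLp.integrable_sqrt_one_add_sq_sub_one (hv : MemLp v 2 μ) :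
    Integrable (fun x => √(1 + v x ^ 2) - 1) μ :=
  hv.integrable_sq.mono'
    ((by fun_prop : Continuous fun t : ℝ => √(1 + t ^ 2) - 1).comp_aestronglyMeasurable hv.1)
    (.of_forall fun x => abs_sqrt_one_add_sq_sub_one_le_sq _)

lemma MeasureTheory.MemLp.integrable_sqrt_one_add_sq_sub_one_sq (hv : MemLp v 2 μ) :
    Integrable (fun x => (√(1 + v x ^ 2) - 1) ^ 2) μ :=
  hv.integrable_sq.mono'
    ((by fun_prop : Continuous fun t : ℝ => (√(1 + t ^ 2) - 1) ^ 2).comp_aestronglyMeasurable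
      hv.1)
    (.of_forall fun x => by simpa [sq_le_sq] using abs_sqrt_one_add_sq_sub_one_le_abs (v x))

end

lemma integral_sqrt_one_add_sq_sub_one_sq_le {v : EuclideanSpace ℝ (Fin 2) → ℝ}
    (hv : MemLp v 2) (hd : Differentiable ℝ v) (hD : MemLp (fun x => ‖fderiv ℝ v x‖) 2) :
    ∫ x, (√(1 + v x ^ 2) - 1) ^ 2 ≤
      ((∫ x, v x ^ 2 / (1 + |v x|) ^ 2) + (∫ x, ‖fderiv ℝ v x‖ ^ 2) / 2) ^ 2 := by
  set w := fun x => √(1 + v x ^ 2) - 1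
  have hw : Differentiable ℝ w := fun x =>
    (((hasDerivAt_sqrt_one_add_sq (v x)).comp_hasFDerivAt x (hd x).hasFDerivAt).sub_const
      1).differentiableAt
  have hbound : Integrable fun x => v x ^ 2 / (1 + |v x|) ^ 2 + ‖fderiv ℝ v x‖ ^ 2 / 2 :=
    hv.integrable_sq_div_one_add_abs_sq.add (hD.integrable_sq.div_const 2)
  have hDw : Integrable fun x => ‖fderiv ℝ w x‖ :=
    hbound.mono' (measurable_fderiv ℝ w).norm.aestronglyMeasurable
      (.of_forall fun x => by
        rw [norm_norm]; exact norm_fderiv_sqrt_one_add_sq_sub_one_le (hd x))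
  have hIDw : ∫ x, ‖fderiv ℝ w x‖ ≤
      (∫ x, v x ^ 2 / (1 + |v x|) ^ 2) + (∫ x, ‖fderiv ℝ v x‖ ^ 2) / 2 := by
    rw [← integral_div, ← integral_add hv.integrable_sq_div_one_add_abs_sq
      (hD.integrable_sq.div_const 2)]
    exact integral_mono hDw hbound fun x => norm_fderiv_sqrt_one_add_sq_sub_one_le (hd x)
  calc ∫ x, w x ^ 2 ≤ (∫ x, ‖fderiv ℝ w x‖) ^ 2 :=
        integral_sq_le_sq_integral_norm_fderiv hw hv.integrable_sqrt_one_add_sq_sub_one hDw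
    _ ≤ _ := pow_le_pow_left₀ (integral_nonneg fun _ => norm_nonneg _) hIDw 2

theorem stmt7 :
    ∃ C : ℝ, 0 < C ∧ ∀ v : EuclideanSpace ℝ (Fin 2) → ℝ,
      MemLp v 2 volume → Differentiable ℝ v →
      MemLp (fun x => ‖fderiv ℝ v x‖) 2 volume →
      Real.sqrt (∫ x, (v x) ^ 2) ≤
        C * (1 + (∫ x, ‖fderiv ℝ v x‖ ^ 2) +
          ∫ x, (v x) ^ 2 / (1 + |v x|) ^ 2) := by
  refine ⟨4, by norm_num, fun v hv hd hD => ?_⟩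
  set A := ∫ x, ‖fderiv ℝ v x‖ ^ 2
  set B := ∫ x, (v x) ^ 2 / (1 + |v x|) ^ 2
  have hA : 0 ≤ A := integral_nonneg fun _ => sq_nonneg _
  have hB : 0 ≤ B := integral_nonneg fun _ => by positivity
  have hw := integral_sqrt_one_add_sq_sub_one_sq_le hv hd hD
  have hS : ∫ x, v x ^ 2 ≤ 9 * (∫ x, (√(1 + v x ^ 2) - 1) ^ 2) + 4 * B := by
    rw [← integral_const_mul, ← integral_const_mul, ← integral_add]
    · exact integral_mono hv.integrable_sq
        ((hv.integrable_sqrt_one_add_sq_sub_one_sq.const_mul 9).add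
          (hv.integrable_sq_div_one_add_abs_sq.const_mul 4))
        fun x => sq_le_sqrt_one_add_sq_sub_one (v x)
    · exact hv.integrable_sqrt_one_add_sq_sub_one_sq.const_mul 9
    · exact hv.integrable_sq_div_one_add_abs_sq.const_mul 4
  rw [Real.sqrt_le_left (by positivity)]
  nlinarith
end

section
/- Let X be a reflexive Banach space and I: X → ℝ a C¹ functional that is weakly lower semi-continuous and satisfies the coercivity estimate (DI(w))(w) ≥ C₁‖w‖ − C₂ for all w ∈ X with constants C₁, C₂ > 0. Then I has a critical point in X. -/
/-!
Along a ray the coercivity estimate reads `DI(tu)u ≥ C₁‖u‖ - C₂/t`, so integrating over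
`t ∈ [1/2, 1]` gives `I u - I (u/2) ≥ C₁‖u‖/2 - C₂`. Starting from a ball around `0` on which `I`
is bounded below (continuity), repeated doubling turns this into `I u ≥ B + C₁‖u‖/2`; in
particular minimizing sequences are bounded.

In a reflexive space the weak closure of a bounded set is compact (Banach–Alaoglu in the bidual).
For a sequence it is moreover metrizable, because countably many functionals separate the points
of the separable closed span of the sequence; so bounded sequences have weakly convergent
subsequences. Weak lower semicontinuity makes the weak limit of a minimizing subsequence a global
minimizer, hence a critical point.
-/

open Filter

open Topology Set Bornology

section WeakCompactness

variable {X : Type*} [NormedAddCommGroup X] [NormedSpace ℝ X]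

theorem exists_seq_dual_separating_of_isSeparable {s : Set X}
    (hs : TopologicalSpace.IsSeparable s) :
    ∃ φ : ℕ → StrongDual ℝ X, ∀ z ∈ s, (∀ j, φ j z = 0) → z = 0 := by
  obtain ⟨c, hc, hsc⟩ := hs
  rcases c.eq_empty_or_nonempty with rfl | hne
  · exact ⟨0, fun z hz => absurd (hsc hz) (by simp)⟩
  obtain ⟨y, rfl⟩ := hc.exists_eq_range hne
  choose φ hφ₁ hφ₂ using fun j => exists_dual_vector'' ℝ (y j)
  refine ⟨φ, fun z hz hφz => norm_le_zero_iff.mp ?_⟩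
  refine le_of_forall_pos_le_add fun ε hε => ?_
  obtain ⟨_, ⟨j, rfl⟩, hj⟩ := Metric.mem_closure_iff.mp (hsc hz) (ε / 2) (by positivity)
  -- `φ j` vanishes at `z` and norms `y j`, so `y j` is no longer than its distance to `z`.
  have hy : ‖y j‖ ≤ ‖z - y j‖ := calc
    ‖y j‖ = φ j (y j - z) := by simp [hφ₂, hφz]
    _ ≤ ‖φ j (y j - z)‖ := Real.le_norm_self _
    _ ≤ ‖y j - z‖ := by simpa using (φ j).le_of_opNorm_le (hφ₁ j) (y j - z)
    _ = ‖z - y j‖ := norm_sub_rev _ _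
  rw [dist_eq_norm] at hj
  calc ‖z‖ ≤ ‖z - y j‖ + ‖y j‖ := norm_le_norm_sub_add z (y j)
    _ ≤ 0 + ε := by linarith

theorem isCompact_closure_toWeakSpace_image
    (hrefl : Function.Surjective (NormedSpace.inclusionInDoubleDual ℝ X))
    {s : Set X} (hs : IsBounded s) : IsCompact (closure (toWeakSpace ℝ X '' s)) := by
  refine NormedSpace.isCompact_closure_of_isBounded ℝ X _
    (by rwa [(toWeakSpace ℝ X).injective.preimage_image]) fun Λ _ => ?_
  obtain ⟨x, hx⟩ := hrefl (StrongDual.toWeakDual.symm Λ)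
  exact ⟨toWeakSpace ℝ X x, DFunLike.ext _ _ fun ψ => congrArg (fun T => T ψ) hx⟩

theorem closure_toWeakSpace_image_subset {s t : Set X} (hst : s ⊆ t) (ht : Convex ℝ t)
    (ht' : IsClosed t) : closure (toWeakSpace ℝ X '' s) ⊆ toWeakSpace ℝ X '' t := by
  rw [← ht'.closure_eq, ht.toWeakSpace_closure ℝ]
  exact closure_mono (image_mono hst)

theorem exists_subseq_tendsto_toWeakSpace
    (hrefl : Function.Surjective (NormedSpace.inclusionInDoubleDual ℝ X))
    {w : ℕ → X} (hw : IsBounded (range w)) :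
    ∃ x, ∃ ns : ℕ → ℕ, StrictMono ns ∧
      Tendsto (fun n => toWeakSpace ℝ X (w (ns n))) atTop (𝓝 (toWeakSpace ℝ X x)) := by
  set Y := (Submodule.span ℝ (range w)).topologicalClosure
  have hY : TopologicalSpace.IsSeparable (Y : Set X) := by
    rw [Submodule.topologicalClosure_coe]
    exact (countable_range w).isSeparable.span.closure
  obtain ⟨φ, hφ⟩ := exists_seq_dual_separating_of_isSeparable hY
  set K := closure (toWeakSpace ℝ X '' range w)
  have hKY : K ⊆ toWeakSpace ℝ X '' Y :=
    closure_toWeakSpace_image_subset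
      (Submodule.subset_span.trans (Submodule.le_topologicalClosure _)) Y.convex
      (Submodule.isClosed_topologicalClosure _)
  have : CompactSpace K :=
    isCompact_iff_compactSpace.mp (isCompact_closure_toWeakSpace_image hrefl hw)
  have : TopologicalSpace.MetrizableSpace K := by
    refine Metric.PiNatEmbed.TopologicalSpace.MetrizableSpace.of_countable_separating
      (fun j (z : K) => φ j ((toWeakSpace ℝ X).symm z))
      (fun j => (WeakBilin.eval_continuous (topDualPairing ℝ X).flip (φ j)).comp
        continuous_subtype_val) ?_
    rintro ⟨_, hz⟩ ⟨_, hz'⟩ hne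
    obtain ⟨y, hy, rfl⟩ := hKY hz
    obtain ⟨y', hy', rfl⟩ := hKY hz'
    by_contra! heq
    refine hne (Subtype.ext (congrArg (toWeakSpace ℝ X)
      (sub_eq_zero.mp (hφ _ (Y.sub_mem hy hy') fun j => ?_))))
    simpa [sub_eq_zero] using heq j
  obtain ⟨a, -, ns, hns, hlim⟩ := isCompact_univ.tendsto_subseq (s := univ)
    (x := fun n => (⟨toWeakSpace ℝ X (w n),
      subset_closure (mem_image_of_mem _ (mem_range_self n))⟩ : K))
    fun _ => mem_univ _
  exact ⟨(toWeakSpace ℝ X).symm a, ns, hns, (continuous_subtype_val.tendsto a).comp hlim⟩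

end WeakCompactness

section Coercivity

variable {X : Type*} [NormedAddCommGroup X] [NormedSpace ℝ X]

theorem sub_apply_inv_two_smul_ge {I : X → ℝ} (hI : Differentiable ℝ I) {C₁ C₂ : ℝ}
    (hC₂ : 0 ≤ C₂) (hcoer : ∀ w, C₁ * ‖w‖ - C₂ ≤ fderiv ℝ I w w) (u : X) :
    C₁ * ‖u‖ / 2 - C₂ ≤ I u - I ((2 : ℝ)⁻¹ • u) := by
  have hray (t : ℝ) : HasDerivAt (fun t : ℝ => I (t • u)) (fderiv ℝ I (t • u) u) t := by
    have hline : HasDerivAt (fun t : ℝ => t • u) u t := by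
      simpa using (hasDerivAt_id t).smul_const u
    exact (hI (t • u)).hasFDerivAt.comp_hasDerivAt t hline
  have hmvt := (convex_Icc (2⁻¹ : ℝ) 1).mul_sub_le_image_sub_of_le_deriv
    (fun t _ => (hray t).continuousAt.continuousWithinAt)
    (fun t _ => (hray t).differentiableAt.differentiableWithinAt)
    (C := C₁ * ‖u‖ - 2 * C₂) (fun t ht => ?_) 2⁻¹ (by norm_num) 1 (by norm_num) (by norm_num)
  · simp only [one_smul] at hmvt
    linarith
  rw [interior_Icc] at ht
  have ht₀ : 0 < t := by linarith [ht.1]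
  have hc := hcoer (t • u)
  rw [map_smul, smul_eq_mul, norm_smul, Real.norm_of_nonneg ht₀.le] at hc
  rw [(hray t).deriv]
  refine le_of_mul_le_mul_left ?_ ht₀
  nlinarith [ht.1]

theorem le_of_norm_le_mul_two_pow {g : X → ℝ} {r B c : ℝ} (hc : 0 ≤ c)
    (hB : ∀ u, ‖u‖ ≤ r → B ≤ g u) (hg : ∀ u, r < ‖u‖ → g ((2 : ℝ)⁻¹ • u) - c ≤ g u)
    (n : ℕ) {u : X} (hu : ‖u‖ ≤ r * 2 ^ n) : B - n * c ≤ g u := by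
  induction n generalizing u with
  | zero => simpa using hB u (by simpa using hu)
  | succ n ih =>
    by_cases hun : ‖u‖ ≤ r * 2 ^ n
    · have := ih hun
      push_cast
      linarith
    · have hr : r < ‖u‖ := by
        rcases le_or_gt 0 r with hr | hr
        · exact (le_mul_of_one_le_right hr (one_le_pow₀ one_le_two)).trans_lt (not_le.mp hun)
        · exact hr.trans_le (norm_nonneg u)
      have hhalf : ‖(2 : ℝ)⁻¹ • u‖ ≤ r * 2 ^ n := by
        rw [norm_smul, norm_inv, Real.norm_two]
        rw [pow_succ] at hu
        linarith
      have := ih hhalf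
      have := hg u hr
      push_cast
      linarith

theorem exists_le_mul_two_pow {r : ℝ} (hr : 0 < r) (x : ℝ) : ∃ n : ℕ, x ≤ r * 2 ^ n := by
  obtain ⟨n, hn⟩ := pow_unbounded_of_one_lt (x / r) one_lt_two
  exact ⟨n, by rw [div_lt_iff₀' hr] at hn; exact hn.le⟩

theorem exists_add_mul_norm_le {I : X → ℝ} (hI : Differentiable ℝ I) {C₁ C₂ : ℝ}
    (hC₁ : 0 < C₁) (hC₂ : 0 ≤ C₂) (hcoer : ∀ w, C₁ * ‖w‖ - C₂ ≤ fderiv ℝ I w w) :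
    ∃ B, ∀ u, B + C₁ / 2 * ‖u‖ ≤ I u := by
  set g : X → ℝ := fun u => I u - C₁ / 2 * ‖u‖
  have hg (u : X) : g ((2 : ℝ)⁻¹ • u) + (C₁ * ‖u‖ / 4 - C₂) ≤ g u := by
    have := sub_apply_inv_two_smul_ge hI hC₂ hcoer u
    simp only [g, norm_smul, norm_inv, Real.norm_two]
    linarith
  obtain ⟨δ, hδ, hball⟩ : ∃ δ > 0, ∀ u ∈ Metric.closedBall (0 : X) δ, g 0 - 1 < g u :=
    Metric.nhds_basis_closedBall.eventually_iff.mp <|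
      (hI.continuous.sub (continuous_const.mul continuous_norm)).continuousAt.eventually
        (Ioi_mem_nhds (sub_one_lt (g 0)))
  set ρ := max δ (4 * C₂ / C₁)
  obtain ⟨n, hn⟩ := exists_le_mul_two_pow hδ ρ
  have hρ (u : X) (hu : ‖u‖ ≤ ρ) : g 0 - 1 - n * C₂ ≤ g u :=
    le_of_norm_le_mul_two_pow hC₂ (fun u hu => (hball u (by simpa using hu)).le)
      (fun u _ => by linarith [hg u, mul_nonneg hC₁.le (norm_nonneg u)]) n (hu.trans hn)
  have hρ' (u : X) (hu : ρ < ‖u‖) : g ((2 : ℝ)⁻¹ • u) - 0 ≤ g u := by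
    have : 4 * C₂ ≤ C₁ * ‖u‖ := by
      rw [← div_le_iff₀' hC₁]
      exact (le_max_right _ _).trans hu.le
    linarith [hg u]
  refine ⟨I 0 - 1 - n * C₂, fun u => ?_⟩
  obtain ⟨m, hm⟩ := exists_le_mul_two_pow (hδ.trans_le (le_max_left _ _)) ‖u‖
  have := le_of_norm_le_mul_two_pow le_rfl hρ hρ' m hm
  simp only [g, norm_zero, mul_zero, sub_zero] at this
  linarith

end Coercivity

theorem exists_forall_le_of_coercive_of_weak_lsc
    {X : Type*} [NormedAddCommGroup X] [NormedSpace ℝ X]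
    (hrefl : Function.Surjective (NormedSpace.inclusionInDoubleDual ℝ X)) {I : X → ℝ}
    (hlsc : ∀ (u : ℕ → X) (x : X),
      (∀ φ : StrongDual ℝ X, Tendsto (fun n => φ (u n)) atTop (𝓝 (φ x))) →
      I x ≤ liminf (fun n => I (u n)) atTop)
    {B c : ℝ} (hc : 0 < c) (hI : ∀ u, B + c * ‖u‖ ≤ I u) : ∃ x, ∀ z, I x ≤ I z := by
  have hbdd : BddBelow (range I) := ⟨B, by
    rintro _ ⟨u, rfl⟩
    linarith [hI u, mul_nonneg hc.le (norm_nonneg u)]⟩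
  obtain ⟨s, hs_anti, hs_lim, hs_mem⟩ := exists_seq_tendsto_sInf (range_nonempty I) hbdd
  choose w hw using hs_mem
  have hw_bdd : IsBounded (range w) := by
    refine isBounded_iff_forall_norm_le.mpr ⟨(s 0 - B) / c, ?_⟩
    rintro _ ⟨n, rfl⟩
    rw [le_div_iff₀' hc]
    linarith [hI (w n), hw n, hs_anti (Nat.zero_le n)]
  obtain ⟨x, ns, hns, hx⟩ := exists_subseq_tendsto_toWeakSpace hrefl hw_bdd
  have hlim : Tendsto (fun n => I (w (ns n))) atTop (𝓝 (sInf (range I))) :=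
    (hs_lim.comp hns.tendsto_atTop).congr fun n => (hw (ns n)).symm
  have hIx := hlsc (fun n => w (ns n)) x
    fun ψ => ((WeakBilin.eval_continuous (topDualPairing ℝ X).flip ψ).tendsto _).comp hx
  rw [hlim.liminf_eq] at hIx
  exact ⟨x, fun z => hIx.trans (csInf_le hbdd ⟨z, rfl⟩)⟩

theorem stmt9_general {X : Type*} [NormedAddCommGroup X] [NormedSpace ℝ X]
    (hrefl : Function.Surjective (NormedSpace.inclusionInDoubleDual ℝ X))
    (I : X → ℝ) (hdiff : Differentiable ℝ I)
    (hlsc : ∀ (u : ℕ → X) (x : X),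
      (∀ φ : X →L[ℝ] ℝ, Tendsto (fun n => φ (u n)) atTop (nhds (φ x))) →
      I x ≤ liminf (fun n => I (u n)) atTop)
    (C₁ C₂ : ℝ) (hC₁ : 0 < C₁) (hC₂ : 0 < C₂)
    (hcoer : ∀ w : X, C₁ * ‖w‖ - C₂ ≤ fderiv ℝ I w w) :
    ∃ w : X, fderiv ℝ I w = 0 := by
  obtain ⟨B, hB⟩ := exists_add_mul_norm_le hdiff hC₁ hC₂.le hcoer
  obtain ⟨x, hx⟩ := exists_forall_le_of_coercive_of_weak_lsc hrefl hlsc (half_pos hC₁) hB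
  exact ⟨x, IsLocalMin.fderiv_eq_zero (Eventually.of_forall hx)⟩

theorem stmt9 {X : Type*} [NormedAddCommGroup X] [NormedSpace ℝ X]
    [CompleteSpace X]
    (hrefl : Function.Surjective (NormedSpace.inclusionInDoubleDual ℝ X))
    (I : X → ℝ) (hdiff : Differentiable ℝ I)
    (hC1 : Continuous fun w => fderiv ℝ I w)
    (hlsc : ∀ (u : ℕ → X) (x : X),
      (∀ φ : X →L[ℝ] ℝ, Tendsto (fun n => φ (u n)) atTop (nhds (φ x))) →
      I x ≤ liminf (fun n => I (u n)) atTop)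
    (C₁ C₂ : ℝ) (hC₁ : 0 < C₁) (hC₂ : 0 < C₂)
    (hcoer : ∀ w : X, C₁ * ‖w‖ - C₂ ≤ fderiv ℝ I w w) :
    ∃ w : X, fderiv ℝ I w = 0 :=
  stmt9_general hrefl I hdiff hlsc C₁ C₂ hC₁ hC₂ hcoer
end

section
/- Let Ω be a doubly periodic domain (flat 2-torus). Suppose (w₁, w₂, w₃) ∈ W^{1,2}(Ω)³ solves Δw₁ = α(e^{u₁⁰+v₁} − e^{u₂⁰+v₂}) + (4π/|Ω|)(n₁−n₂), Δw₂ = α(e^{u₁⁰+v₁} + e^{u₂⁰+v₂} − 2e^{u₃⁰+v₃}) + (4π/|Ω|)(n₁+n₂−2n₃), Δw₃ = 2β(e^{u₁⁰+v₁} + e^{u₂⁰+v₂} + e^{u₃⁰+v₃} − 3ξ) + (4π/|Ω|)(n₁+n₂+n₃), where v₁ = w₁/2 + w₂/6 + w₃/3, v₂ = −w₁/2 + w₂/6 + w₃/3, v₃ = −w₂/3 + w₃/3. Then necessarily the three inequalities (1/(3α))(n₁+n₂−2n₃) + (1/α)(n₁−n₂) + (1/(3β))(n₁+n₂+n₃)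 < ξ|Ω|/(2π), (1/(3α))(n₁+n₂−2n₃) − (1/α)(n₁−n₂) + (1/(3β))(n₁+n₂+n₃) < ξ|Ω|/(2π), and −(2/(3α))(n₁+n₂−2n₃) + (1/(3β))(n₁+n₂+n₃) < ξ|Ω|/(2π) hold simultaneously. -/
open MeasureTheory Real

/-- Laplacian of a function on `ℝ × ℝ`, via second directional derivatives. -/
noncomputable def lap (f : ℝ × ℝ → ℝ) (p : ℝ × ℝ) : ℝ :=
  fderiv ℝ (fun q => fderiv ℝ f q (1, 0)) p (1, 0) +
  fderiv ℝ (fun q => fderiv ℝ f q (0, 1)) p (0, 1)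

/-- Double periodicity with periods `L₁`, `L₂`. -/
def DPeriodic (L₁ L₂ : ℝ) (f : ℝ × ℝ → ℝ) : Prop :=
  ∀ p : ℝ × ℝ, f (p.1 + L₁, p.2) = f p ∧ f (p.1, p.2 + L₂) = f p

lemma contDiff_dfun {f : ℝ × ℝ → ℝ} (hf : ContDiff ℝ (⊤ : ℕ∞) f) (v : ℝ × ℝ) :
    ContDiff ℝ (⊤ : ℕ∞) (fun q => fderiv ℝ f q v) :=
  (hf.fderiv_right (by simp)).clm_apply contDiff_const

lemma fderiv_periodic {f : ℝ × ℝ → ℝ} (hf : ContDiff ℝ (⊤ : ℕ∞) f) (c : ℝ × ℝ)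
    (hp : ∀ p, f (p + c) = f p) (p : ℝ × ℝ) :
    fderiv ℝ f (p + c) = fderiv ℝ f p := by
  have h1 : HasFDerivAt (fun q : ℝ × ℝ => f (q + c)) (fderiv ℝ f (p + c)) p := by
    have := ((hf.differentiable (by simp) (p + c)).hasFDerivAt).comp p
      ((hasFDerivAt_id p).add_const c)
    exact this
  rw [funext hp] at h1
  exact h1.fderiv.symm

lemma hasDerivAt_line_x (F : ℝ × ℝ → ℝ) (hF : Differentiable ℝ F) (x y : ℝ) :
    HasDerivAt (fun t => F (t, y)) (fderiv ℝ F (x, y) (1, 0)) x := by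
  have hline : HasDerivAt (fun t : ℝ => ((t, y) : ℝ × ℝ)) ((1 : ℝ), (0 : ℝ)) x :=
    (hasDerivAt_id x).prodMk (hasDerivAt_const x y)
  exact (hF (x, y)).hasFDerivAt.comp_hasDerivAt x hline

lemma hasDerivAt_line_y (F : ℝ × ℝ → ℝ) (hF : Differentiable ℝ F) (x y : ℝ) :
    HasDerivAt (fun t => F (x, t)) (fderiv ℝ F (x, y) (0, 1)) y := by
  have hline : HasDerivAt (fun t : ℝ => ((x, t) : ℝ × ℝ)) ((0 : ℝ), (1 : ℝ)) y :=
    (hasDerivAt_const y x).prodMk (hasDerivAt_id y)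
  exact (hF (x, y)).hasFDerivAt.comp_hasDerivAt y hline

lemma int_xx {L₁ : ℝ} (f : ℝ × ℝ → ℝ) (hf : ContDiff ℝ (⊤ : ℕ∞) f)
    (hp : ∀ p : ℝ × ℝ, f (p.1 + L₁, p.2) = f p) (y : ℝ) :
    ∫ x in (0:ℝ)..L₁, fderiv ℝ (fun q => fderiv ℝ f q (1, 0)) (x, y) (1, 0) = 0 := by
  set F : ℝ × ℝ → ℝ := fun q => fderiv ℝ f q (1, 0) with hFdef
  have hFc : ContDiff ℝ (⊤ : ℕ∞) F := contDiff_dfun hf _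
  have hder : ∀ x ∈ Set.uIcc (0:ℝ) L₁,
      HasDerivAt (fun t => F (t, y)) (fderiv ℝ F (x, y) (1, 0)) x :=
    fun x _ => hasDerivAt_line_x F (hFc.differentiable (by simp)) x y
  have hcont : Continuous (fun x => fderiv ℝ F (x, y) (1, 0)) :=
    (contDiff_dfun hFc ((1:ℝ), (0:ℝ))).continuous.comp (continuous_id.prodMk continuous_const)
  rw [intervalIntegral.integral_eq_sub_of_hasDerivAt hder (hcont.intervalIntegrable _ _)]
  have hper : ∀ p : ℝ × ℝ, f (p + (L₁, 0)) = f p := by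
    intro p
    rw [show p + (L₁, 0) = (p.1 + L₁, p.2) by simp [Prod.ext_iff]]
    exact hp p
  have h := fderiv_periodic hf (L₁, 0) hper ((0:ℝ), y)
  have : F (L₁, y) = F (0, y) := by
    simp only [hFdef]
    rw [show ((L₁:ℝ), y) = ((0:ℝ), y) + (L₁, 0) by simp, h]
  rw [this]; ring

lemma int_yy {L₂ : ℝ} (f : ℝ × ℝ → ℝ) (hf : ContDiff ℝ (⊤ : ℕ∞) f)
    (hp : ∀ p : ℝ × ℝ, f (p.1, p.2 + L₂) = f p) (x : ℝ) :
    ∫ y in (0:ℝ)..L₂, fderiv ℝ (fun q => fderiv ℝ f q (0, 1)) (x, y) (0, 1) = 0 := by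
  set F : ℝ × ℝ → ℝ := fun q => fderiv ℝ f q (0, 1) with hFdef
  have hFc : ContDiff ℝ (⊤ : ℕ∞) F := contDiff_dfun hf _
  have hder : ∀ y ∈ Set.uIcc (0:ℝ) L₂,
      HasDerivAt (fun t => F (x, t)) (fderiv ℝ F (x, y) (0, 1)) y :=
    fun y _ => hasDerivAt_line_y F (hFc.differentiable (by simp)) x y
  have hcont : Continuous (fun y => fderiv ℝ F (x, y) (0, 1)) :=
    (contDiff_dfun hFc ((0:ℝ), (1:ℝ))).continuous.comp (continuous_const.prodMk continuous_id)
  rw [intervalIntegral.integral_eq_sub_of_hasDerivAt hder (hcont.intervalIntegrable _ _)]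
  have hper : ∀ p : ℝ × ℝ, f (p + (0, L₂)) = f p := by
    intro p
    rw [show p + (0, L₂) = (p.1, p.2 + L₂) by simp [Prod.ext_iff]]
    exact hp p
  have h := fderiv_periodic hf (0, L₂) hper (x, (0:ℝ))
  have : F (x, L₂) = F (x, 0) := by
    simp only [hFdef]
    rw [show ((x:ℝ), L₂) = ((x:ℝ), (0:ℝ)) + (0, L₂) by simp, h]
  rw [this]; ring

lemma integrableOn_rect {L₁ L₂ : ℝ} (g : ℝ × ℝ → ℝ) (hg : Continuous g) :
    IntegrableOn g (Set.Ioc (0:ℝ) L₁ ×ˢ Set.Ioc (0:ℝ) L₂) :=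
  ((hg.continuousOn).integrableOn_compact (isCompact_Icc.prod isCompact_Icc)).mono_set
    (Set.prod_mono Set.Ioc_subset_Icc_self Set.Ioc_subset_Icc_self)

lemma int_lap {L₁ L₂ : ℝ} (hL₁ : 0 < L₁) (hL₂ : 0 < L₂) (f : ℝ × ℝ → ℝ)
    (hf : ContDiff ℝ (⊤ : ℕ∞) f) (hpf : DPeriodic L₁ L₂ f) :
    ∫ p in Set.Ioc (0:ℝ) L₁ ×ˢ Set.Ioc (0:ℝ) L₂, lap f p = 0 := by
  set t1 : ℝ × ℝ → ℝ := fun p => fderiv ℝ (fun q => fderiv ℝ f q (1, 0)) p (1, 0) with ht1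
  set t2 : ℝ × ℝ → ℝ := fun p => fderiv ℝ (fun q => fderiv ℝ f q (0, 1)) p (0, 1) with ht2
  have hc1 : Continuous t1 := (contDiff_dfun (contDiff_dfun hf _) _).continuous
  have hc2 : Continuous t2 := (contDiff_dfun (contDiff_dfun hf _) _).continuous
  have hi1 : IntegrableOn t1 (Set.Ioc (0:ℝ) L₁ ×ˢ Set.Ioc (0:ℝ) L₂) := integrableOn_rect _ hc1
  have hi2 : IntegrableOn t2 (Set.Ioc (0:ℝ) L₁ ×ˢ Set.Ioc (0:ℝ) L₂) := integrableOn_rect _ hc2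
  have hsplit : (fun p => lap f p) = fun p => t1 p + t2 p := rfl
  rw [hsplit, integral_add hi1 hi2]
  have e1 : ∫ p in Set.Ioc (0:ℝ) L₁ ×ˢ Set.Ioc (0:ℝ) L₂, t1 p = 0 := by
    have hi1' : Integrable t1 ((volume.restrict (Set.Ioc (0:ℝ) L₁)).prod
        (volume.restrict (Set.Ioc (0:ℝ) L₂))) := by
      rw [Measure.prod_restrict]
      rw [Measure.volume_eq_prod] at hi1
      exact hi1
    rw [Measure.volume_eq_prod, ← Measure.prod_restrict, integral_prod_symm _ hi1']
    have hz : ∀ y : ℝ, ∫ x in Set.Ioc (0:ℝ) L₁, t1 (x, y) = 0 := by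
      intro y
      rw [← intervalIntegral.integral_of_le hL₁.le]
      exact int_xx f hf (fun p => (hpf p).1) y
    simp [hz]
  have e2 : ∫ p in Set.Ioc (0:ℝ) L₁ ×ˢ Set.Ioc (0:ℝ) L₂, t2 p = 0 := by
    have hi2' : Integrable t2 ((volume.restrict (Set.Ioc (0:ℝ) L₁)).prod
        (volume.restrict (Set.Ioc (0:ℝ) L₂))) := by
      rw [Measure.prod_restrict]
      rw [Measure.volume_eq_prod] at hi2
      exact hi2
    rw [Measure.volume_eq_prod, ← Measure.prod_restrict, integral_prod _ hi2']
    have hz : ∀ x : ℝ, ∫ y in Set.Ioc (0:ℝ) L₂, t2 (x, y) = 0 := by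
      intro x
      rw [← intervalIntegral.integral_of_le hL₂.le]
      exact int_yy f hf (fun p => (hpf p).2) x
    simp [hz]
  rw [e1, e2]; ring

lemma exp_int_pos {L₁ L₂ : ℝ} (hL₁ : 0 < L₁) (hL₂ : 0 < L₂) (g : ℝ × ℝ → ℝ)
    (hg : Continuous g) :
    0 < ∫ p in Set.Ioc (0:ℝ) L₁ ×ˢ Set.Ioc (0:ℝ) L₂, Real.exp (g p) := by
  have hint : IntegrableOn (fun p => Real.exp (g p))
      (Set.Ioc (0:ℝ) L₁ ×ˢ Set.Ioc (0:ℝ) L₂) :=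
    integrableOn_rect _ (Real.continuous_exp.comp hg)
  rw [setIntegral_pos_iff_support_of_nonneg_ae
    (Filter.Eventually.of_forall (fun p => (Real.exp_pos _).le)) hint]
  have hsupp : Function.support (fun p => Real.exp (g p)) = Set.univ := by
    ext p; simp [Real.exp_ne_zero]
  rw [hsupp, Set.univ_inter]
  rw [Measure.volume_eq_prod, Measure.prod_prod, Real.volume_Ioc, Real.volume_Ioc]
  simp only [sub_zero]
  exact ENNReal.mul_pos (by simp [ENNReal.ofReal_pos, hL₁]) (by simp [ENNReal.ofReal_pos, hL₂])

lemma vol_rect {L₁ L₂ : ℝ} (hL₁ : 0 < L₁) (hL₂ : 0 < L₂) :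
    (volume (Set.Ioc (0:ℝ) L₁ ×ˢ Set.Ioc (0:ℝ) L₂)).toReal = L₁ * L₂ := by
  rw [Measure.volume_eq_prod, Measure.prod_prod, Real.volume_Ioc, Real.volume_Ioc]
  simp [ENNReal.toReal_mul, ENNReal.toReal_ofReal hL₁.le, ENNReal.toReal_ofReal hL₂.le]

lemma int_affine {L₁ L₂ : ℝ} (hL₁ : 0 < L₁) (hL₂ : 0 < L₂) (g : ℝ × ℝ → ℝ)
    (hg : Continuous g) (a c : ℝ) :
    ∫ p in Set.Ioc (0:ℝ) L₁ ×ˢ Set.Ioc (0:ℝ) L₂, (a * g p + c) =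
      a * (∫ p in Set.Ioc (0:ℝ) L₁ ×ˢ Set.Ioc (0:ℝ) L₂, g p) + (L₁ * L₂) * c := by
  rw [integral_add ((integrableOn_rect g hg).const_mul a) (integrableOn_const (ne_of_lt ?_))]
  · rw [integral_const_mul, setIntegral_const, measureReal_def, vol_rect hL₁ hL₂, smul_eq_mul]
  · rw [Measure.volume_eq_prod, Measure.prod_prod, Real.volume_Ioc, Real.volume_Ioc]
    exact ENNReal.mul_lt_top ENNReal.ofReal_lt_top ENNReal.ofReal_lt_top


theorem stmt12 (L₁ L₂ : ℝ) (hL₁ : 0 < L₁) (hL₂ : 0 < L₂)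
    (α β ξ : ℝ) (hα : 0 < α) (hβ : 0 < β) (hξ : 0 < ξ)
    (n₁ n₂ n₃ : ℕ)
    (u₁ u₂ u₃ w₁ w₂ w₃ : ℝ × ℝ → ℝ)
    (hu₁ : ContDiff ℝ (⊤ : ℕ∞) u₁) (hu₂ : ContDiff ℝ (⊤ : ℕ∞) u₂) (hu₃ : ContDiff ℝ (⊤ : ℕ∞) u₃)
    (hw₁ : ContDiff ℝ (⊤ : ℕ∞) w₁) (hw₂ : ContDiff ℝ (⊤ : ℕ∞) w₂) (hw₃ : ContDiff ℝ (⊤ : ℕ∞) w₃)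
    (hpu₁ : DPeriodic L₁ L₂ u₁) (hpu₂ : DPeriodic L₁ L₂ u₂)
    (hpu₃ : DPeriodic L₁ L₂ u₃)
    (hpw₁ : DPeriodic L₁ L₂ w₁) (hpw₂ : DPeriodic L₁ L₂ w₂)
    (hpw₃ : DPeriodic L₁ L₂ w₃)
    (v₁ : ℝ × ℝ → ℝ) (hv₁ : v₁ = fun p => w₁ p / 2 + w₂ p / 6 + w₃ p / 3)
    (v₂ : ℝ × ℝ → ℝ) (hv₂ : v₂ = fun p => -w₁ p / 2 + w₂ p / 6 + w₃ p / 3)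
    (v₃ : ℝ × ℝ → ℝ) (hv₃ : v₃ = fun p => -w₂ p / 3 + w₃ p / 3)
    (heq₁ : ∀ p : ℝ × ℝ, lap w₁ p =
      α * (Real.exp (u₁ p + v₁ p) - Real.exp (u₂ p + v₂ p)) +
        (4 * π / (L₁ * L₂)) * ((n₁ : ℝ) - (n₂ : ℝ)))
    (heq₂ : ∀ p : ℝ × ℝ, lap w₂ p =
      α * (Real.exp (u₁ p + v₁ p) + Real.exp (u₂ p + v₂ p)
            - 2 * Real.exp (u₃ p + v₃ p)) +
        (4 * π / (L₁ * L₂)) * ((n₁ : ℝ) + (n₂ : ℝ) - 2 * (n₃ : ℝ)))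
    (heq₃ : ∀ p : ℝ × ℝ, lap w₃ p =
      2 * β * (Real.exp (u₁ p + v₁ p) + Real.exp (u₂ p + v₂ p)
            + Real.exp (u₃ p + v₃ p) - 3 * ξ) +
        (4 * π / (L₁ * L₂)) * ((n₁ : ℝ) + (n₂ : ℝ) + (n₃ : ℝ))) :
    (1 / (3 * α)) * ((n₁ : ℝ) + n₂ - 2 * n₃) + (1 / α) * ((n₁ : ℝ) - n₂)
        + (1 / (3 * β)) * ((n₁ : ℝ) + n₂ + n₃) < ξ * (L₁ * L₂) / (2 * π) ∧
    (1 / (3 * α)) * ((n₁ : ℝ) + n₂ - 2 * n₃) - (1 / α) * ((n₁ : ℝ) - n₂)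
        + (1 / (3 * β)) * ((n₁ : ℝ) + n₂ + n₃) < ξ * (L₁ * L₂) / (2 * π) ∧
    -(2 / (3 * α)) * ((n₁ : ℝ) + n₂ - 2 * n₃)
        + (1 / (3 * β)) * ((n₁ : ℝ) + n₂ + n₃) < ξ * (L₁ * L₂) / (2 * π) := by
  have hA : (0:ℝ) < L₁ * L₂ := mul_pos hL₁ hL₂
  have h2π : (0:ℝ) < 2 * π := by positivity
  -- continuity
  have hcv₁ : Continuous v₁ := by
    rw [hv₁]
    exact ((hw₁.continuous.div_const 2).add (hw₂.continuous.div_const 6)).add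
      (hw₃.continuous.div_const 3)
  have hcv₂ : Continuous v₂ := by
    rw [hv₂]
    exact ((hw₁.continuous.neg.div_const 2).add (hw₂.continuous.div_const 6)).add
      (hw₃.continuous.div_const 3)
  have hcv₃ : Continuous v₃ := by
    rw [hv₃]
    exact (hw₂.continuous.neg.div_const 3).add (hw₃.continuous.div_const 3)
  have hg₁ : Continuous fun p => Real.exp (u₁ p + v₁ p) :=
    Real.continuous_exp.comp (hu₁.continuous.add hcv₁)
  have hg₂ : Continuous fun p => Real.exp (u₂ p + v₂ p) :=
    Real.continuous_exp.comp (hu₂.continuous.add hcv₂)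
  have hg₃ : Continuous fun p => Real.exp (u₃ p + v₃ p) :=
    Real.continuous_exp.comp (hu₃.continuous.add hcv₃)
  set S := Set.Ioc (0:ℝ) L₁ ×ˢ Set.Ioc (0:ℝ) L₂ with hS
  set E₁ := ∫ p in S, Real.exp (u₁ p + v₁ p) with hE₁def
  set E₂ := ∫ p in S, Real.exp (u₂ p + v₂ p) with hE₂def
  set E₃ := ∫ p in S, Real.exp (u₃ p + v₃ p) with hE₃def
  have hE₁pos : 0 < E₁ := exp_int_pos hL₁ hL₂ _ (hu₁.continuous.add hcv₁)
  have hE₂pos : 0 < E₂ := exp_int_pos hL₁ hL₂ _ (hu₂.continuous.add hcv₂)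
  have hE₃pos : 0 < E₃ := exp_int_pos hL₁ hL₂ _ (hu₃.continuous.add hcv₃)
  have hi₁ : IntegrableOn (fun p => Real.exp (u₁ p + v₁ p)) S := integrableOn_rect _ hg₁
  have hi₂ : IntegrableOn (fun p => Real.exp (u₂ p + v₂ p)) S := integrableOn_rect _ hg₂
  have hi₃ : IntegrableOn (fun p => Real.exp (u₃ p + v₃ p)) S := integrableOn_rect _ hg₃
  have hi₁₂ : IntegrableOn (fun p => Real.exp (u₁ p + v₁ p) + Real.exp (u₂ p + v₂ p)) S :=
    hi₁.add hi₂
  have hi₂m : IntegrableOn (fun p => 2 * Real.exp (u₃ p + v₃ p)) S := hi₃.const_mul 2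
  have hi₁₂₃ : IntegrableOn (fun p => Real.exp (u₁ p + v₁ p) + Real.exp (u₂ p + v₂ p)
      + Real.exp (u₃ p + v₃ p)) S := hi₁₂.add hi₃
  have hconst : (L₁ * L₂) * (4 * π / (L₁ * L₂)) = 4 * π := by field_simp
  -- equation 1
  have h1 : α * (E₁ - E₂) + 4 * π * ((n₁ : ℝ) - n₂) = 0 := by
    have base : ∫ p in S, lap w₁ p = 0 := int_lap hL₁ hL₂ w₁ hw₁ hpw₁
    have rhs : ∫ p in S, lap w₁ p =
        α * (E₁ - E₂) + (L₁ * L₂) * ((4 * π / (L₁ * L₂)) * ((n₁ : ℝ) - n₂)) := by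
      calc ∫ p in S, lap w₁ p
          = ∫ p in S, (α * ((fun p => Real.exp (u₁ p + v₁ p) - Real.exp (u₂ p + v₂ p)) p)
              + (4 * π / (L₁ * L₂)) * ((n₁ : ℝ) - n₂)) := by
            simp only [heq₁]
        _ = α * (∫ p in S, (Real.exp (u₁ p + v₁ p) - Real.exp (u₂ p + v₂ p)))
              + (L₁ * L₂) * ((4 * π / (L₁ * L₂)) * ((n₁ : ℝ) - n₂)) :=
            int_affine hL₁ hL₂ _ (hg₁.sub hg₂) _ _
        _ = α * (E₁ - E₂) + (L₁ * L₂) * ((4 * π / (L₁ * L₂)) * ((n₁ : ℝ) - n₂)) := by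
            rw [integral_sub hi₁ hi₂]
    rw [base] at rhs
    rw [show (L₁ * L₂) * ((4 * π / (L₁ * L₂)) * ((n₁ : ℝ) - n₂))
        = 4 * π * ((n₁ : ℝ) - n₂) by rw [← mul_assoc, hconst]] at rhs
    linarith
  -- equation 2
  have h2 : α * (E₁ + E₂ - 2 * E₃) + 4 * π * ((n₁ : ℝ) + n₂ - 2 * n₃) = 0 := by
    have base : ∫ p in S, lap w₂ p = 0 := int_lap hL₁ hL₂ w₂ hw₂ hpw₂
    have rhs : ∫ p in S, lap w₂ p =
        α * (E₁ + E₂ - 2 * E₃)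
          + (L₁ * L₂) * ((4 * π / (L₁ * L₂)) * ((n₁ : ℝ) + n₂ - 2 * n₃)) := by
      calc ∫ p in S, lap w₂ p
          = ∫ p in S, (α * ((fun p => Real.exp (u₁ p + v₁ p) + Real.exp (u₂ p + v₂ p)
                - 2 * Real.exp (u₃ p + v₃ p)) p)
              + (4 * π / (L₁ * L₂)) * ((n₁ : ℝ) + n₂ - 2 * n₃)) := by
            simp only [heq₂]
        _ = α * (∫ p in S, (Real.exp (u₁ p + v₁ p) + Real.exp (u₂ p + v₂ p)
                - 2 * Real.exp (u₃ p + v₃ p)))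
              + (L₁ * L₂) * ((4 * π / (L₁ * L₂)) * ((n₁ : ℝ) + n₂ - 2 * n₃)) :=
            int_affine hL₁ hL₂ _ ((hg₁.add hg₂).sub (continuous_const.mul hg₃)) _ _
        _ = α * (E₁ + E₂ - 2 * E₃)
              + (L₁ * L₂) * ((4 * π / (L₁ * L₂)) * ((n₁ : ℝ) + n₂ - 2 * n₃)) := by
            rw [integral_sub hi₁₂ hi₂m, integral_add hi₁ hi₂, integral_const_mul]
    rw [base] at rhs
    rw [show (L₁ * L₂) * ((4 * π / (L₁ * L₂)) * ((n₁ : ℝ) + n₂ - 2 * n₃))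
        = 4 * π * ((n₁ : ℝ) + n₂ - 2 * n₃) by rw [← mul_assoc, hconst]] at rhs
    linarith
  -- equation 3
  have h3 : 2 * β * (E₁ + E₂ + E₃ - 3 * ξ * (L₁ * L₂))
      + 4 * π * ((n₁ : ℝ) + n₂ + n₃) = 0 := by
    have base : ∫ p in S, lap w₃ p = 0 := int_lap hL₁ hL₂ w₃ hw₃ hpw₃
    have rhs : ∫ p in S, lap w₃ p =
        (2 * β) * (E₁ + E₂ + E₃ - 3 * ξ * (L₁ * L₂))
          + (L₁ * L₂) * ((4 * π / (L₁ * L₂)) * ((n₁ : ℝ) + n₂ + n₃)) := by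
      calc ∫ p in S, lap w₃ p
          = ∫ p in S, ((2 * β) * ((fun p => Real.exp (u₁ p + v₁ p) + Real.exp (u₂ p + v₂ p)
                + Real.exp (u₃ p + v₃ p) - 3 * ξ) p)
              + (4 * π / (L₁ * L₂)) * ((n₁ : ℝ) + n₂ + n₃)) := by
            simp only [heq₃]
        _ = (2 * β) * (∫ p in S, (Real.exp (u₁ p + v₁ p) + Real.exp (u₂ p + v₂ p)
                + Real.exp (u₃ p + v₃ p) - 3 * ξ))
              + (L₁ * L₂) * ((4 * π / (L₁ * L₂)) * ((n₁ : ℝ) + n₂ + n₃)) :=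
            int_affine hL₁ hL₂ _ (((hg₁.add hg₂).add hg₃).sub continuous_const) _ _
        _ = (2 * β) * (E₁ + E₂ + E₃ - 3 * ξ * (L₁ * L₂))
              + (L₁ * L₂) * ((4 * π / (L₁ * L₂)) * ((n₁ : ℝ) + n₂ + n₃)) := by
            rw [integral_sub hi₁₂₃ (integrableOn_const (ne_of_lt ?_)),
              integral_add hi₁₂ hi₃, integral_add hi₁ hi₂, setIntegral_const, measureReal_def,
              vol_rect hL₁ hL₂, smul_eq_mul]
            · rw [hE₁def, hE₂def, hE₃def]; ring
            · rw [hS, Measure.volume_eq_prod, Measure.prod_prod, Real.volume_Ioc,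
                Real.volume_Ioc]
              exact ENNReal.mul_lt_top ENNReal.ofReal_lt_top ENNReal.ofReal_lt_top
    rw [base] at rhs
    rw [show (L₁ * L₂) * ((4 * π / (L₁ * L₂)) * ((n₁ : ℝ) + n₂ + n₃))
        = 4 * π * ((n₁ : ℝ) + n₂ + n₃) by rw [← mul_assoc, hconst]] at rhs
    linarith
  -- solve for E₁, E₂, E₃
  have hE1eq : 6*α*β*E₁ = 6*α*β*ξ*(L₁*L₂) - 4*α*π*((n₁:ℝ)+n₂+n₃)
      - 4*β*π*((n₁:ℝ)+n₂-2*n₃) - 12*β*π*((n₁:ℝ)-n₂) := by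
    linear_combination (3*β) * h1 + β * h2 + α * h3
  have hE2eq : 6*α*β*E₂ = 6*α*β*ξ*(L₁*L₂) - 4*α*π*((n₁:ℝ)+n₂+n₃)
      - 4*β*π*((n₁:ℝ)+n₂-2*n₃) + 12*β*π*((n₁:ℝ)-n₂) := by
    linear_combination (-(3*β)) * h1 + β * h2 + α * h3
  have hE3eq : 6*α*β*E₃ = 6*α*β*ξ*(L₁*L₂) - 4*α*π*((n₁:ℝ)+n₂+n₃)
      + 8*β*π*((n₁:ℝ)+n₂-2*n₃) := by
    linear_combination (-(2*β)) * h2 + α * h3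
  have h61 : (0:ℝ) < 6*α*β*E₁ := by positivity
  have h62 : (0:ℝ) < 6*α*β*E₂ := by positivity
  have h63 : (0:ℝ) < 6*α*β*E₃ := by positivity
  rw [hE1eq] at h61
  rw [hE2eq] at h62
  rw [hE3eq] at h63
  refine ⟨?_, ?_, ?_⟩
  · rw [lt_div_iff₀ h2π, ← sub_pos]
    have e : ξ * (L₁ * L₂) - ((1 / (3 * α)) * ((n₁:ℝ) + n₂ - 2 * n₃)
          + (1 / α) * ((n₁:ℝ) - n₂) + (1 / (3 * β)) * ((n₁:ℝ) + n₂ + n₃)) * (2 * π)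
        = (6*α*β)⁻¹ * (6*α*β*ξ*(L₁*L₂) - 4*α*π*((n₁:ℝ)+n₂+n₃)
          - 4*β*π*((n₁:ℝ)+n₂-2*n₃) - 12*β*π*((n₁:ℝ)-n₂)) := by
      field_simp
      ring
    rw [e]
    exact mul_pos (by positivity) h61
  · rw [lt_div_iff₀ h2π, ← sub_pos]
    have e : ξ * (L₁ * L₂) - ((1 / (3 * α)) * ((n₁:ℝ) + n₂ - 2 * n₃)
          - (1 / α) * ((n₁:ℝ) - n₂) + (1 / (3 * β)) * ((n₁:ℝ) + n₂ + n₃)) * (2 * π)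
        = (6*α*β)⁻¹ * (6*α*β*ξ*(L₁*L₂) - 4*α*π*((n₁:ℝ)+n₂+n₃)
          - 4*β*π*((n₁:ℝ)+n₂-2*n₃) + 12*β*π*((n₁:ℝ)-n₂)) := by
      field_simp
      ring
    rw [e]
    exact mul_pos (by positivity) h62
  · rw [lt_div_iff₀ h2π, ← sub_pos]
    have e : ξ * (L₁ * L₂) - (-(2 / (3 * α)) * ((n₁:ℝ) + n₂ - 2 * n₃)
          + (1 / (3 * β)) * ((n₁:ℝ) + n₂ + n₃)) * (2 * π)
        = (6*α*β)⁻¹ * (6*α*β*ξ*(L₁*L₂) - 4*α*π*((n₁:ℝ)+n₂+n₃)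
          + 8*β*π*((n₁:ℝ)+n₂-2*n₃)) := by
      field_simp
      ring
    rw [e]
    exact mul_pos (by positivity) h63
end

section
/- Let Ω be a flat 2-torus of area |Ω|, and let u⁰ ∈ L¹(Ω) ∩ L^∞(Ω) be given. For η₁, η₂, η₃ > 0 and fixed functions u₁⁰, u₂⁰, u₃⁰, the functional I(w₁,w₂,w₃) = ∫_Ω { (1/(4α))|∇w₁|² + (1/(12α))|∇w₂|² + (1/(12β))|∇w₃|² + e^{u₁⁰+v₁} + e^{u₂⁰+v₂} + e^{u₃⁰+v₃} } dx − η₁·v̄₁ − η₂·v̄₂ − η₃·v̄₃ (where v_ℓ are the linear combinations of the w's as in the Cartan transformation and v̄_ℓ denotes the mean of v_ℓ over Ω) satisfies the lower bound I ≥ ∫_Ω {(1/(4α))|∇ẇ₁|² + (1/(12α))|∇ẇ₂|² + (1/(12β))|∇ẇ₃|²} dx + Σ_{ℓ=1}^3 η_ℓ(1 + ln(σ_ℓ/η_ℓ)), where σ_ℓ = |Ω| exp((1/|Ω|)∫_Ω u_ℓ⁰ dx) and ẇ denotes the mean-zero part. In particular I is bounded below on W^{1,2}(Ω)³. -/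
open MeasureTheory Real

/-- Squared gradient of a function on `ℝ × ℝ`. -/
noncomputable def gradSq (f : ℝ × ℝ → ℝ) (p : ℝ × ℝ) : ℝ :=
  (fderiv ℝ f p (1, 0)) ^ 2 + (fderiv ℝ f p (0, 1)) ^ 2

/-- Double periodicity with periods `L₁`, `L₂`. -/
def DPeriodic' (L₁ L₂ : ℝ) (f : ℝ × ℝ → ℝ) : Prop :=
  ∀ p : ℝ × ℝ, f (p.1 + L₁, p.2) = f p ∧ f (p.1, p.2 + L₂) = f p

/-! Both sides carry the same Dirichlet energy, so the bound splits into one inequality per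
component `ℓ`. By Jensen's inequality for `exp`, `∫ e^{uℓ + vℓ} ≥ σℓ e^{v̄ℓ}`, and
`σ eᵗ - η t ≥ η (1 + log (σ / η))` for every real `t`. -/

/-- The minimum of `t ↦ σ eᵗ - η t` is attained at `eᵗ = η / σ`. -/
theorem mul_one_add_log_div_le_mul_exp_sub {σ η : ℝ} (hσ : 0 < σ) (hη : 0 < η) (t : ℝ) :
    η * (1 + log (σ / η)) ≤ σ * exp t - η * t := by
  have h := add_one_le_exp (t + log (σ / η))
  rw [exp_add, exp_log (div_pos hσ hη)] at h
  have hscaled := mul_le_mul_of_nonneg_left h hη.le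
  have hcancel : η * (exp t * (σ / η)) = σ * exp t := by field_simp
  linarith

section Jensen

variable {X : Type*} [MeasurableSpace X] {μ : Measure X} [IsFiniteMeasure μ] [NeZero μ]

theorem measureReal_univ_mul_exp_average_le_integral_exp {f : X → ℝ} (hf : Integrable f μ)
    (hexp : Integrable (fun x => exp (f x)) μ) :
    μ.real Set.univ * exp (⨍ x, f x ∂μ) ≤ ∫ x, exp (f x) ∂μ := by
  have hjensen := convexOn_exp.map_average_le continuous_exp.continuousOn isClosed_univ
    (Filter.Eventually.of_forall fun x => Set.mem_univ (f x)) hf hexp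
  have hpos : 0 < μ.real Set.univ := by simp
  calc μ.real Set.univ * exp (⨍ x, f x ∂μ) ≤ μ.real Set.univ * ⨍ x, exp (f x) ∂μ := by gcongr
    _ = ∫ x, exp (f x) ∂μ := by rw [average_eq, smul_eq_mul, mul_inv_cancel_left₀ hpos.ne']

theorem mul_one_add_log_le_integral_exp_add_sub_average {u v : X → ℝ}
    (hu : Integrable u μ) (hv : Integrable v μ)
    (hexp : Integrable (fun x => exp (u x + v x)) μ) {η : ℝ} (hη : 0 < η) :
    η * (1 + log (μ.real Set.univ * exp (⨍ x, u x ∂μ) / η))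
      ≤ ∫ x, exp (u x + v x) ∂μ - η * ⨍ x, v x ∂μ := by
  have hadd : ⨍ x, (u x + v x) ∂μ = (⨍ x, u x ∂μ) + ⨍ x, v x ∂μ := by
    simp only [average_eq, integral_add hu hv, smul_add]
  have hjensen := measureReal_univ_mul_exp_average_le_integral_exp (f := fun x => u x + v x)
    (hu.add hv) hexp
  rw [hadd, exp_add, ← mul_assoc] at hjensen
  have hσ : 0 < μ.real Set.univ * exp (⨍ x, u x ∂μ) := mul_pos (by simp) (exp_pos _)
  have hmin := mul_one_add_log_div_le_mul_exp_sub hσ hη (⨍ x, v x ∂μ)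
  linarith

end Jensen

open Set in
theorem volume_Ioc_prod_Ioc {a₁ b₁ : ℝ} (h₁ : a₁ ≤ b₁) (a₂ b₂ : ℝ) :
    volume (Ioc a₁ b₁ ×ˢ Ioc a₂ b₂) = ENNReal.ofReal ((b₁ - a₁) * (b₂ - a₂)) := by
  rw [Measure.volume_eq_prod, Measure.prod_prod, Real.volume_Ioc, Real.volume_Ioc,
    ENNReal.ofReal_mul (sub_nonneg.2 h₁)]

open Set in
theorem Continuous.integrableOn_Ioc_prod_Ioc {f : ℝ × ℝ → ℝ} (hf : Continuous f)
    (a₁ b₁ a₂ b₂ : ℝ) : IntegrableOn f (Ioc a₁ b₁ ×ˢ Ioc a₂ b₂) :=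
  (hf.continuousOn.integrableOn_compact (isCompact_Icc.prod isCompact_Icc)).mono_set
    (prod_mono Ioc_subset_Icc_self Ioc_subset_Icc_self)

theorem stmt13_general (L₁ L₂ : ℝ) (hL₁ : 0 < L₁) (hL₂ : 0 < L₂)
    (Ω : Set (ℝ × ℝ)) (hΩ : Ω = Set.Ioc 0 L₁ ×ˢ Set.Ioc 0 L₂)
    (A : ℝ) (hA : A = L₁ * L₂)
    (α β : ℝ)
    (η₁ η₂ η₃ : ℝ) (hη₁ : 0 < η₁) (hη₂ : 0 < η₂) (hη₃ : 0 < η₃)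
    (u₁ u₂ u₃ w₁ w₂ w₃ : ℝ × ℝ → ℝ)
    (hu₁ : Continuous u₁) (hu₂ : Continuous u₂) (hu₃ : Continuous u₃)
    (hw₁ : ContDiff ℝ 1 w₁) (hw₂ : ContDiff ℝ 1 w₂) (hw₃ : ContDiff ℝ 1 w₃)
    (v₁ : ℝ × ℝ → ℝ) (hv₁ : v₁ = fun p => w₁ p / 2 + w₂ p / 6 + w₃ p / 3)
    (v₂ : ℝ × ℝ → ℝ) (hv₂ : v₂ = fun p => -w₁ p / 2 + w₂ p / 6 + w₃ p / 3)
    (v₃ : ℝ × ℝ → ℝ) (hv₃ : v₃ = fun p => -w₂ p / 3 + w₃ p / 3)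
    (hie₁ : IntegrableOn (fun p => Real.exp (u₁ p + v₁ p)) Ω volume)
    (hie₂ : IntegrableOn (fun p => Real.exp (u₂ p + v₂ p)) Ω volume)
    (hie₃ : IntegrableOn (fun p => Real.exp (u₃ p + v₃ p)) Ω volume)
    (σ₁ σ₂ σ₃ : ℝ)
    (hσ₁ : σ₁ = A * Real.exp ((1 / A) * ∫ p in Ω, u₁ p))
    (hσ₂ : σ₂ = A * Real.exp ((1 / A) * ∫ p in Ω, u₂ p))
    (hσ₃ : σ₃ = A * Real.exp ((1 / A) * ∫ p in Ω, u₃ p)) :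
    (∫ p in Ω, ((1 / (4 * α)) * gradSq w₁ p + (1 / (12 * α)) * gradSq w₂ p
        + (1 / (12 * β)) * gradSq w₃ p))
      + (∫ p in Ω, (Real.exp (u₁ p + v₁ p) + Real.exp (u₂ p + v₂ p)
        + Real.exp (u₃ p + v₃ p)))
      - η₁ * ((1 / A) * ∫ p in Ω, v₁ p)
      - η₂ * ((1 / A) * ∫ p in Ω, v₂ p)
      - η₃ * ((1 / A) * ∫ p in Ω, v₃ p)
    ≥ (∫ p in Ω, ((1 / (4 * α)) * gradSq w₁ p + (1 / (12 * α)) * gradSq w₂ p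
        + (1 / (12 * β)) * gradSq w₃ p))
      + η₁ * (1 + Real.log (σ₁ / η₁))
      + η₂ * (1 + Real.log (σ₂ / η₂))
      + η₃ * (1 + Real.log (σ₃ / η₃)) := by
  have hA0 : 0 < A := hA ▸ mul_pos hL₁ hL₂
  have hvol : volume Ω = ENNReal.ofReal A := by
    rw [hΩ, hA, volume_Ioc_prod_Ioc hL₁.le 0 L₂, sub_zero, sub_zero]
  have : IsFiniteMeasure (volume.restrict Ω) :=
    isFiniteMeasure_restrict.2 (hvol ▸ ENNReal.ofReal_ne_top)
  have : NeZero (volume Ω) := ⟨hvol ▸ (ENNReal.ofReal_pos.2 hA0).ne'⟩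
  have hvolReal : (volume.restrict Ω).real Set.univ = A := by
    rw [measureReal_restrict_apply_univ, measureReal_def, hvol, ENNReal.toReal_ofReal hA0.le]
  have hmean (f : ℝ × ℝ → ℝ) : (1 / A) * ∫ p in Ω, f p = ⨍ p in Ω, f p := by
    rw [average_eq, hvolReal, smul_eq_mul, one_div]
  have hint {f : ℝ × ℝ → ℝ} (hf : Continuous f) : IntegrableOn f Ω :=
    hΩ ▸ hf.integrableOn_Ioc_prod_Ioc _ _ _ _
  have hcomp {η : ℝ} (hη : 0 < η) {u v : ℝ × ℝ → ℝ} (hu : Continuous u) (hv : Continuous v)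
      (hexp : IntegrableOn (fun p => exp (u p + v p)) Ω) :
      η * (1 + log (A * exp ((1 / A) * ∫ p in Ω, u p) / η))
        ≤ (∫ p in Ω, exp (u p + v p)) - η * ((1 / A) * ∫ p in Ω, v p) := by
    rw [hmean, hmean, ← hvolReal]
    exact mul_one_add_log_le_integral_exp_add_sub_average (hint hu) (hint hv) hexp hη
  have hw₁ := hw₁.continuous
  have hw₂ := hw₂.continuous
  have hw₃ := hw₃.continuous
  have h₁ := hcomp hη₁ hu₁ (hv₁ ▸ by fun_prop) hie₁
  have h₂ := hcomp hη₂ hu₂ (hv₂ ▸ by fun_prop) hie₂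
  have h₃ := hcomp hη₃ hu₃ (hv₃ ▸ by fun_prop) hie₃
  rw [integral_add (f := fun p => exp (u₁ p + v₁ p) + exp (u₂ p + v₂ p)) (hie₁.add hie₂) hie₃,
    integral_add hie₁ hie₂]
  subst hσ₁ hσ₂ hσ₃
  linarith

theorem stmt13 (L₁ L₂ : ℝ) (hL₁ : 0 < L₁) (hL₂ : 0 < L₂)
    (Ω : Set (ℝ × ℝ)) (hΩ : Ω = Set.Ioc 0 L₁ ×ˢ Set.Ioc 0 L₂)
    (A : ℝ) (hA : A = L₁ * L₂)
    (α β : ℝ) (hα : 0 < α) (hβ : 0 < β)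
    (η₁ η₂ η₃ : ℝ) (hη₁ : 0 < η₁) (hη₂ : 0 < η₂) (hη₃ : 0 < η₃)
    (u₁ u₂ u₃ w₁ w₂ w₃ : ℝ × ℝ → ℝ)
    (hu₁ : Continuous u₁) (hu₂ : Continuous u₂) (hu₃ : Continuous u₃)
    (hw₁ : ContDiff ℝ 1 w₁) (hw₂ : ContDiff ℝ 1 w₂) (hw₃ : ContDiff ℝ 1 w₃)
    (hpu₁ : DPeriodic' L₁ L₂ u₁) (hpu₂ : DPeriodic' L₁ L₂ u₂)
    (hpu₃ : DPeriodic' L₁ L₂ u₃)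
    (hpw₁ : DPeriodic' L₁ L₂ w₁) (hpw₂ : DPeriodic' L₁ L₂ w₂)
    (hpw₃ : DPeriodic' L₁ L₂ w₃)
    (v₁ : ℝ × ℝ → ℝ) (hv₁ : v₁ = fun p => w₁ p / 2 + w₂ p / 6 + w₃ p / 3)
    (v₂ : ℝ × ℝ → ℝ) (hv₂ : v₂ = fun p => -w₁ p / 2 + w₂ p / 6 + w₃ p / 3)
    (v₃ : ℝ × ℝ → ℝ) (hv₃ : v₃ = fun p => -w₂ p / 3 + w₃ p / 3)
    (hie₁ : IntegrableOn (fun p => Real.exp (u₁ p + v₁ p)) Ω volume)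
    (hie₂ : IntegrableOn (fun p => Real.exp (u₂ p + v₂ p)) Ω volume)
    (hie₃ : IntegrableOn (fun p => Real.exp (u₃ p + v₃ p)) Ω volume)
    (hig₁ : IntegrableOn (gradSq w₁) Ω volume)
    (hig₂ : IntegrableOn (gradSq w₂) Ω volume)
    (hig₃ : IntegrableOn (gradSq w₃) Ω volume)
    (σ₁ σ₂ σ₃ : ℝ)
    (hσ₁ : σ₁ = A * Real.exp ((1 / A) * ∫ p in Ω, u₁ p))
    (hσ₂ : σ₂ = A * Real.exp ((1 / A) * ∫ p in Ω, u₂ p))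
    (hσ₃ : σ₃ = A * Real.exp ((1 / A) * ∫ p in Ω, u₃ p)) :
    (∫ p in Ω, ((1 / (4 * α)) * gradSq w₁ p + (1 / (12 * α)) * gradSq w₂ p
        + (1 / (12 * β)) * gradSq w₃ p))
      + (∫ p in Ω, (Real.exp (u₁ p + v₁ p) + Real.exp (u₂ p + v₂ p)
        + Real.exp (u₃ p + v₃ p)))
      - η₁ * ((1 / A) * ∫ p in Ω, v₁ p)
      - η₂ * ((1 / A) * ∫ p in Ω, v₂ p)
      - η₃ * ((1 / A) * ∫ p in Ω, v₃ p)
    ≥ (∫ p in Ω, ((1 / (4 * α)) * gradSq w₁ p + (1 / (12 * α)) * gradSq w₂ p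
        + (1 / (12 * β)) * gradSq w₃ p))
      + η₁ * (1 + Real.log (σ₁ / η₁))
      + η₂ * (1 + Real.log (σ₂ / η₂))
      + η₃ * (1 + Real.log (σ₃ / η₃)) :=
  stmt13_general L₁ L₂ hL₁ hL₂ Ω hΩ A hA α β η₁ η₂ η₃ hη₁ hη₂ hη₃ u₁ u₂ u₃ w₁ w₂ w₃ hu₁ hu₂ hu₃ hw₁
    hw₂ hw₃ v₁ hv₁ v₂ hv₂ v₃ hv₃ hie₁ hie₂ hie₃ σ₁ σ₂ σ₃ hσ₁ hσ₂ hσ₃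
end
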